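/- arXiv:2212.04978 — 2 statements merged into one kernel-verified Lean document; each statement's English description precedes it below -/
import Mathlib

section
/- For every integer n ≥ 1 there exists a nonzero polynomial h ∈ ℤ[X_1, ..., X_n] with the following property: for every field F and every monic separable irreducible polynomial f = X^n + a_1 X^{n-1} + ... + a_n over F whose Galois group over F (the Galois group of its splitting field K over F) is cyclic of order n, if h(a_1, ..., a_n) ≠ 0 in F, then the n roots of f in K form a basis of K as an F-vector space (i.e., f is a normal polynomial over F). -/
/-!
Write `yᵢ = σⁱ r` for the roots of `f`. Applying `σʲ` to a relation `∑ cᵢ yᵢ = 0` shows that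
`c` lies in the left kernel of the circulant matrix `(y_{i-j})`, so the roots are independent as
soon as the circulant determinant `D(y)` is nonzero. `D` is not symmetric, but its product `N`
over all permutations of the variables is, and `D(y) ∣ N(y)`. By the fundamental theorem of
symmetric polynomials `N = P(e₁, …, eₙ)`, and by Vieta `eₖ(y) = (-1)ᵏ aₖ`, so
`h = P(-a₁, a₂, -a₃, …)` works. It is nonzero because the same identity at the generic roots
`y = X` returns `N ≠ 0`.
-/

open Polynomial

namespace MvPolynomial

section PermNorm

variable {σ R : Type*} [CommSemiring R] [Fintype σ] [DecidableEq σ]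

noncomputable def permNorm (p : MvPolynomial σ R) : MvPolynomial σ R :=
  ∏ e : Equiv.Perm σ, rename e p

theorem isSymmetric_permNorm (p : MvPolynomial σ R) : (permNorm p).IsSymmetric := by
  intro e
  simp only [permNorm, map_prod, rename_rename]
  exact Fintype.prod_equiv (Equiv.mulLeft e) _ _ fun _ => rfl

theorem dvd_permNorm (p : MvPolynomial σ R) : p ∣ permNorm p := by
  simpa [permNorm] using Finset.dvd_prod_of_mem (fun e : Equiv.Perm σ => rename e p)
    (Finset.mem_univ 1)

theorem permNorm_ne_zero [NoZeroDivisors R] {p : MvPolynomial σ R} (hp : p ≠ 0) :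
    permNorm p ≠ 0 :=
  have := nontrivial_of_ne p 0 hp
  Finset.prod_ne_zero_iff.2 fun e _ => (map_ne_zero_iff _ (rename_injective _ e.injective)).2 hp

end PermNorm

section Circulant

variable (R : Type*) [CommRing R] (n : ℕ)

noncomputable def circulantDet : MvPolynomial (Fin n) R :=
  (Matrix.circulant X).det

variable {R n}

theorem aeval_circulantDet {A : Type*} [CommRing A] [Algebra R A] (y : Fin n → A) :
    aeval y (circulantDet R n) = (Matrix.circulant y).det := by
  simp only [circulantDet, AlgHom.map_det, AlgHom.mapMatrix_apply, Matrix.map_circulant, aeval_X]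

theorem circulantDet_ne_zero [Nontrivial R] : circulantDet R n ≠ 0 := by
  intro h
  have := congrArg (aeval fun i : Fin n => if (i : ℕ) = 0 then (1 : R) else 0) h
  rw [aeval_circulantDet, Matrix.Fin.circulant_ite, Matrix.det_one, map_zero] at this
  exact one_ne_zero this

end Circulant

section RootsAndCoefficients

variable {n : ℕ}

theorem coeff_prod_X_sub_C_eq_aeval_esymm {A : Type*} [CommRing A] (y : Fin n → A)
    (i : Fin n) :
    (∏ j, (Polynomial.X - Polynomial.C (y j))).coeff (n - 1 - i) =
      (-1) ^ ((i : ℕ) + 1) * aeval y (esymm (Fin n) ℤ (i + 1)) := by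
  have hprod : ∏ j, (Polynomial.X - Polynomial.C (y j)) =
      ((Finset.univ.val.map y).map fun a => Polynomial.X - Polynomial.C a).prod := by
    rw [Multiset.map_map]; rfl
  have hi := i.isLt
  rw [hprod, Multiset.prod_X_sub_C_coeff _ (by simp; omega), aeval_esymm_eq_multiset_esymm]
  simp only [Multiset.card_map, Finset.card_val, Finset.card_univ, Fintype.card_fin]
  rw [show n - (n - 1 - i) = i + 1 by omega]

theorem aeval_coeff_prod_X_sub_C_signed {A : Type*} [CommRing A] (y : Fin n → A)
    (P : MvPolynomial (Fin n) ℤ) :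
    aeval (fun i : Fin n => (∏ j, (Polynomial.X - Polynomial.C (y j))).coeff (n - 1 - i))
        (aeval (fun i : Fin n => (-1 : MvPolynomial (Fin n) ℤ) ^ ((i : ℕ) + 1) * X i) P) =
      aeval y (aeval (fun i : Fin n => esymm (Fin n) ℤ (i + 1)) P) := by
  simp only [aeval_eq_bind₁, aeval_bind₁]
  congr 2 with i
  rw [map_mul, aeval_X, coeff_prod_X_sub_C_eq_aeval_esymm, ← mul_assoc, map_pow, map_neg,
    map_one, ← mul_pow, neg_one_mul, neg_neg, one_pow, one_mul]

theorem exists_aeval_coeff_prod_X_sub_C_eq {Q : MvPolynomial (Fin n) ℤ} (hQ : Q.IsSymmetric)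
    (hQ0 : Q ≠ 0) :
    ∃ h : MvPolynomial (Fin n) ℤ, h ≠ 0 ∧ ∀ (A : Type*) [CommRing A] (y : Fin n → A),
      aeval (fun i : Fin n => (∏ j, (Polynomial.X - Polynomial.C (y j))).coeff (n - 1 - i)) h =
        aeval y Q := by
  obtain ⟨P, hP⟩ := esymmAlgHom_surjective ℤ (Fintype.card_fin n).le ⟨Q, hQ⟩
  replace hP : aeval (fun i : Fin n => esymm (Fin n) ℤ (i + 1)) P = Q := by
    rw [← esymmAlgHom_apply, hP]
  refine ⟨aeval (fun i : Fin n => (-1 : MvPolynomial (Fin n) ℤ) ^ ((i : ℕ) + 1) * X i) P,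
    fun h0 => hQ0 ?_, fun A _ y => ?_⟩
  · have := aeval_coeff_prod_X_sub_C_signed (X : Fin n → MvPolynomial (Fin n) ℤ) P
    rw [h0, map_zero, hP] at this
    exact (this.trans (aeval_X_left_apply Q)).symm
  · rw [aeval_coeff_prod_X_sub_C_signed, hP]

end RootsAndCoefficients

end MvPolynomial

theorem pow_finVal_mul_pow_finVal_sub {M : Type*} [Monoid M] {n : ℕ} {g : M} (hg : g ^ n = 1)
    (i j : Fin n) : g ^ (j : ℕ) * g ^ ((i - j : Fin n) : ℕ) = g ^ (i : ℕ) := by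
  have : NeZero n := ⟨fun h => (h ▸ i).elim0⟩
  rw [← pow_add, pow_eq_pow_mod _ hg, ← Fin.val_add, add_sub_cancel]

theorem Polynomial.eq_prod_X_sub_C_of_injective {A : Type*} [CommRing A] [IsDomain A]
    {p : A[X]} (hp : p.Monic) {n : ℕ} (hdeg : p.natDegree = n) {y : Fin n → A}
    (hy : Function.Injective y) (hroot : ∀ i, p.IsRoot (y i)) : p = ∏ i, (X - C (y i)) := by
  have hprod : ∏ i, (X - C (y i)) = ((Finset.univ.val.map y).map fun a => X - C a).prod := by
    rw [Multiset.map_map]; rfl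
  have hle : Finset.univ.val.map y ≤ p.roots := by
    rw [Multiset.le_iff_subset (Finset.univ.nodup.map hy)]
    intro a ha
    obtain ⟨i, -, rfl⟩ := Multiset.mem_map.1 ha
    exact (mem_roots hp.ne_zero).2 (hroot i)
  refine eq_of_monic_of_dvd_of_natDegree_le (monic_prod_X_sub_C _ _) hp ?_ (by simp [hdeg])
  rw [hprod]
  exact (Multiset.prod_X_sub_C_dvd_iff_le_roots hp.ne_zero _).2 hle

theorem linearIndependent_pow_apply_of_det_circulant_ne_zero {F K : Type*} [Field F]
    [CommRing K] [IsDomain K] [Algebra F K] {n : ℕ} {σ : K ≃ₐ[F] K} (hσ : σ ^ n = 1) {r : K}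
    (hdet : (Matrix.circulant fun i : Fin n => (σ ^ (i : ℕ)) r).det ≠ 0) :
    LinearIndependent F fun i : Fin n => (σ ^ (i : ℕ)) r := by
  rw [Fintype.linearIndependent_iff]
  intro c hc
  suffices Matrix.vecMul (algebraMap F K ∘ c)
      (Matrix.circulant fun i : Fin n => (σ ^ (i : ℕ)) r) = 0 by
    intro i
    exact (algebraMap F K).injective <|
      (congrFun (Matrix.eq_zero_of_vecMul_eq_zero hdet this) i).trans (map_zero _).symm
  funext j
  apply (σ ^ (j : ℕ)).injective
  simp only [Matrix.vecMul, dotProduct, Matrix.circulant_apply, Function.comp_apply,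
    Pi.zero_apply, map_zero, map_sum, map_mul, AlgEquiv.commutes]
  rw [← hc]
  refine Finset.sum_congr rfl fun i _ => ?_
  rw [← AlgEquiv.mul_apply, ← pow_finVal_mul_pow_finVal_sub hσ i j, Algebra.smul_def]

theorem injective_pow_apply_of_adjoin_eq_top {R A : Type*} [CommSemiring R] [Semiring A]
    [Algebra R A] {n : ℕ} {σ : A ≃ₐ[R] A} (hσ : orderOf σ = n) {r : A}
    (hr : Algebra.adjoin R {r} = ⊤) :
    Function.Injective fun i : Fin n => (σ ^ (i : ℕ)) r := by
  intro i j hij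
  have : σ ^ (i : ℕ) = σ ^ (j : ℕ) := AlgEquiv.coe_toAlgHom_injective <|
    AlgHom.ext_of_adjoin_eq_top hr fun x hx => by rw [Set.mem_singleton_iff.1 hx]; exact hij
  exact Fin.ext (pow_injOn_Iio_orderOf (hσ ▸ i.isLt) (hσ ▸ j.isLt) this)

theorem stmt2_general (n : ℕ) :
    ∃ h : MvPolynomial (Fin n) ℤ, h ≠ 0 ∧
      ∀ (F K : Type) [Field F] [Field K] [Algebra F K],
        ∀ f : Polynomial F, f.Monic → Irreducible f → f.Separable → f.natDegree = n →
        Polynomial.IsSplittingField F K f →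
        IsCyclic (K ≃ₐ[F] K) → Nat.card (K ≃ₐ[F] K) = n →
        MvPolynomial.aeval (fun i : Fin n => f.coeff (n - 1 - (i : ℕ))) h ≠ 0 →
        ∀ r : K, Polynomial.aeval r f = 0 →
        ∀ σ : K ≃ₐ[F] K, (∀ τ : K ≃ₐ[F] K, τ ∈ Subgroup.zpowers σ) →
          LinearIndependent F (fun i : Fin n => (σ ^ (i : ℕ)) r) ∧
          Submodule.span F (Set.range fun i : Fin n => (σ ^ (i : ℕ)) r) = ⊤ := by
  obtain ⟨h, h0, hcoeff⟩ := MvPolynomial.exists_aeval_coeff_prod_X_sub_C_eq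
    (MvPolynomial.isSymmetric_permNorm (MvPolynomial.circulantDet ℤ n))
    (MvPolynomial.permNorm_ne_zero MvPolynomial.circulantDet_ne_zero)
  refine ⟨h, h0, fun F K _ _ _ f hmon hirr hsep hdeg hsplit _ hcard hh r hr σ hσ => ?_⟩
  have : FiniteDimensional F K := IsSplittingField.finiteDimensional K f
  have : IsGalois F K := IsGalois.of_separable_splitting_field hsep
  have hrank : Module.finrank F K = n := by rw [← IsGalois.card_aut_eq_finrank, hcard]
  have hprim : IntermediateField.adjoin F {r} = ⊤ := by
    rw [Field.primitive_element_iff_minpoly_natDegree_eq,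
      ← minpoly.eq_of_irreducible_of_monic hirr hr hmon, hdeg, hrank]
  have horder : orderOf σ = n := (orderOf_eq_card_of_forall_mem_zpowers hσ).trans hcard
  set y := fun i : Fin n => (σ ^ (i : ℕ)) r
  have hfactor : f.map (algebraMap F K) = ∏ i, (X - C (y i)) :=
    eq_prod_X_sub_C_of_injective (hmon.map _) (by rw [natDegree_map, hdeg])
      (injective_pow_apply_of_adjoin_eq_top horder (Algebra.adjoin_eq_top_of_primitive_element
        (IsIntegral.of_finite F r).isAlgebraic hprim))
      fun i => by rw [IsRoot, eval_map_algebraMap, aeval_algEquiv, AlgHom.comp_apply, hr, map_zero]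
  have hnorm : MvPolynomial.aeval y (MvPolynomial.circulantDet ℤ n).permNorm ≠ 0 := by
    rw [← hcoeff K y, ← hfactor]
    simp only [coeff_map]
    exact (MvPolynomial.aeval_algebraMap_apply K _ h).trans_ne ((_root_.map_ne_zero _).2 hh)
  have hdet : (Matrix.circulant y).det ≠ 0 := by
    rw [← MvPolynomial.aeval_circulantDet (R := ℤ)]
    exact ne_zero_of_dvd_ne_zero hnorm (map_dvd _ (MvPolynomial.dvd_permNorm _))
  have hli := linearIndependent_pow_apply_of_det_circulant_ne_zero
    (horder ▸ pow_orderOf_eq_one σ) hdet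
  exact ⟨hli, hli.span_eq_top_of_card_eq_finrank' (by rw [Fintype.card_fin, hrank])⟩

/-- For every n ≥ 1 there is a nonzero h ∈ ℤ[X_1,...,X_n] such that for every field F
and monic separable irreducible f = X^n + a_1 X^{n-1} + ⋯ + a_n over F whose Galois
group (of its splitting field K) is cyclic of order n, if h(a_1,...,a_n) ≠ 0 in F then
the n roots of f in K (the orbit of any root under a generator of the Galois group)
form a basis of K over F. -/
theorem stmt2 (n : ℕ) (hn : 1 ≤ n) :
    ∃ h : MvPolynomial (Fin n) ℤ, h ≠ 0 ∧
      ∀ (F K : Type) [Field F] [Field K] [Algebra F K],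
        ∀ f : Polynomial F, f.Monic → Irreducible f → f.Separable → f.natDegree = n →
        Polynomial.IsSplittingField F K f →
        IsCyclic (K ≃ₐ[F] K) → Nat.card (K ≃ₐ[F] K) = n →
        MvPolynomial.aeval (fun i : Fin n => f.coeff (n - 1 - (i : ℕ))) h ≠ 0 →
        ∀ r : K, Polynomial.aeval r f = 0 →
        ∀ σ : K ≃ₐ[F] K, (∀ τ : K ≃ₐ[F] K, τ ∈ Subgroup.zpowers σ) →
          LinearIndependent F (fun i : Fin n => (σ ^ (i : ℕ)) r) ∧
          Submodule.span F (Set.range fun i : Fin n => (σ ^ (i : ℕ)) r) = ⊤ :=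
  stmt2_general n
end

section
/- Let q be a prime power and let f = X^4 + aX^3 + bX^2 + cX + d be a monic irreducible polynomial over F_q, with root r in F_{q^4}. If a ≠ 0, and -a^6 + 8ba^4 - 16ca^3 - 16b^2a^2 + 64bca - 64c^2 ≠ 0, and a^6 - 8ba^4 + 4ca^3 + 20b^2a^2 - 24da^2 - 8bca - 16b^3 - 8c^2 + 64bd ≠ 0, then the four roots r, r^q, r^{q^2}, r^{q^3} of f are linearly independent over F_q (i.e., f is normal over F_q). -/
/-!
The `q`-power Frobenius `σ` generates `Gal(K/F)`, and since `f` is irreducible of degree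
`4 = [K : F]` it splits over `K` as `∏ (X - σⁱ r)`. Applying `σᵏ` to a relation `∑ cᵢ σⁱ r = 0`
gives the system `∑ cᵢ σⁱ⁺ᵏ r = 0`, whose matrix `(x (i + j))`, with `x i = σⁱ r` and indices
mod 4, has determinant `-(x₀ + x₁ + x₂ + x₃)(x₀ - x₁ + x₂ - x₃)((x₀ - x₂)² + (x₁ - x₃)²)`.
By Vieta the first factor is `-a`; the second hypothesis reads `-(a³ - 4ab + 8c)² ≠ 0`, and
`a³ - 4ab + 8c` is, up to sign, the product of `x₀ - x₁ + x₂ - x₃` and its two conjugates under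
`S₄`; the third hypothesis is the product of `(x₀ - x₂)² + (x₁ - x₃)²` and its two conjugates.
-/

open Polynomial

theorem MulSemiringAction.natDegree_charpoly {B G : Type*} [CommRing B] [Nontrivial B] [Group G]
    [MulSemiringAction G B] [Fintype G] (b : B) :
    (charpoly G b).natDegree = Fintype.card G := by
  rw [charpoly_eq, natDegree_prod_of_monic _ _ fun g _ ↦ monic_X_sub_C _]
  simp

theorem map_minpoly_eq_charpoly_of_natDegree_eq_finrank {F K : Type*} [Field F] [Field K]
    [Algebra F K] [FiniteDimensional F K] [IsGalois F K] [Fintype Gal(K/F)] {x : K}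
    (hx : (minpoly F x).natDegree = Module.finrank F K) :
    (minpoly F x).map (algebraMap F K) = MulSemiringAction.charpoly Gal(K/F) x := by
  have : Algebra.IsInvariant F K Gal(K/F) :=
    ⟨fun y hy ↦ (IsGalois.mem_range_algebraMap_iff_fixed y).mpr hy⟩
  obtain ⟨p, hmap, hdeg, hmonic⟩ := lifts_and_natDegree_eq_and_monic
    (Algebra.IsInvariant.charpoly_mem_lifts F K Gal(K/F) x)
    (MulSemiringAction.monic_charpoly _ x)
  have hroot : aeval x p = 0 := by
    rw [aeval_def, ← eval_map, hmap, MulSemiringAction.eval_charpoly]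
  have hp : p = minpoly F x := by
    refine eq_of_monic_of_dvd_of_natDegree_le (minpoly.monic (.of_finite F x)) hmonic
      (minpoly.dvd F x hroot) ?_
    rw [hdeg, hx, MulSemiringAction.natDegree_charpoly, ← Nat.card_eq_fintype_card,
      IsGalois.card_aut_eq_finrank]
  rw [← hp, hmap]

theorem FiniteField.charpoly_eq_prod_frobenius (F K : Type*) [Field F] [Fintype F] [Field K]
    [Finite K] [Algebra F K] (x : K) :
    MulSemiringAction.charpoly Gal(K/F) x =
      ∏ i : Fin (Module.finrank F K), (X - C ((frobeniusAlgEquivOfAlgebraic F K ^ (i : ℕ)) x)) :=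
  (Fintype.prod_bijective _ (bijective_frobeniusAlgEquivOfAlgebraic_pow F K) _ _
    fun _ ↦ rfl).symm

theorem FiniteField.map_minpoly_eq_prod_frobenius {F K : Type*} [Field F] [Fintype F] [Field K]
    [Finite K] [Algebra F K] {x : K} (hx : (minpoly F x).natDegree = Module.finrank F K) :
    (minpoly F x).map (algebraMap F K) =
      ∏ i : Fin (Module.finrank F K), (X - C ((frobeniusAlgEquivOfAlgebraic F K ^ (i : ℕ)) x)) := by
  rw [map_minpoly_eq_charpoly_of_natDegree_eq_finrank hx, charpoly_eq_prod_frobenius]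

theorem AlgEquiv.pow_mod_apply_of_pow_apply_eq {R A : Type*} [CommSemiring R] [Semiring A]
    [Algebra R A] {σ : A ≃ₐ[R] A} {n : ℕ} {x : A} (hx : (σ ^ n) x = x) (m : ℕ) :
    (σ ^ (m % n)) x = (σ ^ m) x := by
  rw [AlgEquiv.coe_pow] at hx
  simpa only [AlgEquiv.coe_pow] using Function.IsPeriodicPt.iterate_mod_apply hx m

theorem linearIndependent_pow_apply_of_det_ne_zero {F K : Type*} [Field F] [Field K]
    [Algebra F K] {n : ℕ} [NeZero n] {σ : K ≃ₐ[F] K} {x : K} (hx : (σ ^ n) x = x)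
    (hdet : (Matrix.of fun i j : Fin n ↦ (σ ^ ((i + j : Fin n) : ℕ)) x).det ≠ 0) :
    LinearIndependent F fun i : Fin n ↦ (σ ^ (i : ℕ)) x := by
  rw [Fintype.linearIndependent_iff]
  intro c hc
  have hshift : (Matrix.of fun i j : Fin n ↦ (σ ^ ((i + j : Fin n) : ℕ)) x).mulVec
      (fun j ↦ algebraMap F K (c j)) = 0 := by
    ext i
    have := congrArg (σ ^ (i : ℕ)) hc
    simp only [map_sum, map_zero, Algebra.smul_def, map_mul, AlgEquiv.commutes,
      ← AlgEquiv.mul_apply, ← pow_add] at this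
    simpa only [Matrix.mulVec, dotProduct, Matrix.of_apply, Fin.val_add,
      AlgEquiv.pow_mod_apply_of_pow_apply_eq hx, mul_comm, Pi.zero_apply] using this
  intro j
  simpa using congrFun (Matrix.eq_zero_of_mulVec_eq_zero hdet hshift) j

theorem Matrix.det_of_add_fin_four {R : Type*} [CommRing R] (v : Fin 4 → R) :
    (Matrix.of fun i j : Fin 4 ↦ v (i + j)).det =
      -((v 0 + v 1 + v 2 + v 3) * (v 0 - v 1 + v 2 - v 3) *
        ((v 0 - v 2) ^ 2 + (v 1 - v 3) ^ 2)) := by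
  rw [Matrix.det_succ_row_zero, Fin.sum_univ_four]
  simp only [Matrix.det_fin_three, Matrix.submatrix_apply, Matrix.of_apply, Fin.succAbove,
    Fin.isValue, Fin.reduceSucc, Fin.reduceCastSucc, Fin.reduceLT, Fin.reduceAdd, ↓reduceIte,
    Fin.coe_ofNat_eq_mod]
  ring

section Quartic

variable {R : Type*} [CommRing R] {a b c d : R} {x : Fin 4 → R}

theorem Polynomial.coeffs_eq_of_quartic_eq_prod_X_sub_C
    (h : X ^ 4 + C a * X ^ 3 + C b * X ^ 2 + C c * X + C d = ∏ i, (X - C (x i))) :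
    a = -(x 0 + x 1 + x 2 + x 3) ∧
    b = x 0 * x 1 + x 0 * x 2 + x 0 * x 3 + x 1 * x 2 + x 1 * x 3 + x 2 * x 3 ∧
    c = -(x 0 * x 1 * x 2 + x 0 * x 1 * x 3 + x 0 * x 2 * x 3 + x 1 * x 2 * x 3) ∧
    d = x 0 * x 1 * x 2 * x 3 := by
  set e₁ := x 0 + x 1 + x 2 + x 3
  set e₂ := x 0 * x 1 + x 0 * x 2 + x 0 * x 3 + x 1 * x 2 + x 1 * x 3 + x 2 * x 3
  set e₃ := x 0 * x 1 * x 2 + x 0 * x 1 * x 3 + x 0 * x 2 * x 3 + x 1 * x 2 * x 3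
  set e₄ := x 0 * x 1 * x 2 * x 3
  have hprod : ∏ i, (X - C (x i)) =
      X ^ 4 + C (-e₁) * X ^ 3 + C e₂ * X ^ 2 + C (-e₃) * X + C e₄ := by
    simp only [Fin.prod_univ_four, map_neg, map_add, map_mul, e₁, e₂, e₃, e₄]
    ring
  rw [hprod] at h
  refine ⟨?_, ?_, ?_, ?_⟩
  · simpa using congrArg (coeff · 3) h
  · simpa using congrArg (coeff · 2) h
  · simpa using congrArg (coeff · 1) h
  · simpa using congrArg (coeff · 0) h

theorem cubic_resolvent_eq_of_quartic_eq_prod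
    (h : X ^ 4 + C a * X ^ 3 + C b * X ^ 2 + C c * X + C d = ∏ i, (X - C (x i))) :
    a ^ 3 - 4 * a * b + 8 * c = -((x 0 + x 1 - x 2 - x 3) * (x 0 - x 1 + x 2 - x 3) *
      (x 0 - x 1 - x 2 + x 3)) := by
  obtain ⟨rfl, rfl, rfl, -⟩ := coeffs_eq_of_quartic_eq_prod_X_sub_C h
  ring

theorem sextic_invariant_eq_of_quartic_eq_prod
    (h : X ^ 4 + C a * X ^ 3 + C b * X ^ 2 + C c * X + C d = ∏ i, (X - C (x i))) :
    a ^ 6 - 8 * b * a ^ 4 + 4 * c * a ^ 3 + 20 * b ^ 2 * a ^ 2 - 24 * d * a ^ 2 -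
      8 * b * c * a - 16 * b ^ 3 - 8 * c ^ 2 + 64 * b * d =
      ((x 0 - x 2) ^ 2 + (x 1 - x 3) ^ 2) * ((x 0 - x 3) ^ 2 + (x 1 - x 2) ^ 2) *
        ((x 0 - x 1) ^ 2 + (x 2 - x 3) ^ 2) := by
  obtain ⟨rfl, rfl, rfl, rfl⟩ := coeffs_eq_of_quartic_eq_prod_X_sub_C h
  ring

theorem det_of_add_ne_zero_of_quartic_eq_prod [IsDomain R]
    (h : X ^ 4 + C a * X ^ 3 + C b * X ^ 2 + C c * X + C d = ∏ i, (X - C (x i))) (ha : a ≠ 0)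
    (h1 : -a ^ 6 + 8 * b * a ^ 4 - 16 * c * a ^ 3 - 16 * b ^ 2 * a ^ 2 +
      64 * b * c * a - 64 * c ^ 2 ≠ 0)
    (h2 : a ^ 6 - 8 * b * a ^ 4 + 4 * c * a ^ 3 + 20 * b ^ 2 * a ^ 2 - 24 * d * a ^ 2 -
      8 * b * c * a - 16 * b ^ 3 - 8 * c ^ 2 + 64 * b * d ≠ 0) :
    (Matrix.of fun i j : Fin 4 ↦ x (i + j)).det ≠ 0 := by
  rw [Matrix.det_of_add_fin_four]
  have hsum : x 0 + x 1 + x 2 + x 3 ≠ 0 := by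
    rw [← neg_ne_zero, ← (coeffs_eq_of_quartic_eq_prod_X_sub_C h).1]
    exact ha
  have halt : x 0 - x 1 + x 2 - x 3 ≠ 0 := by
    intro h0
    have hres := cubic_resolvent_eq_of_quartic_eq_prod h
    rw [h0, mul_zero, zero_mul, neg_zero] at hres
    exact h1 (by linear_combination (-(a ^ 3 - 4 * a * b + 8 * c)) * hres)
  rw [sextic_invariant_eq_of_quartic_eq_prod h] at h2
  exact neg_ne_zero.mpr (mul_ne_zero (mul_ne_zero hsum halt)
    (left_ne_zero_of_mul (left_ne_zero_of_mul h2)))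

end Quartic

/-- Let f = X^4 + aX^3 + bX^2 + cX + d be monic irreducible over F_q with root
r ∈ F_{q^4}. If a ≠ 0, -a^6+8ba^4-16ca^3-16b²a²+64bca-64c² ≠ 0, and
a^6-8ba^4+4ca^3+20b²a²-24da²-8bca-16b³-8c²+64bd ≠ 0, then the roots
r, r^q, r^{q²}, r^{q³} are linearly independent over F_q. -/
theorem stmt18 (F K : Type*) [Field F] [Fintype F] [Field K] [Algebra F K]
    (hrank : Module.finrank F K = 4) (a b c d : F)
    (hirr : Irreducible (Polynomial.X ^ 4 + Polynomial.C a * Polynomial.X ^ 3 +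
      Polynomial.C b * Polynomial.X ^ 2 + Polynomial.C c * Polynomial.X + Polynomial.C d))
    (r : K)
    (hr : Polynomial.aeval r (Polynomial.X ^ 4 + Polynomial.C a * Polynomial.X ^ 3 +
      Polynomial.C b * Polynomial.X ^ 2 + Polynomial.C c * Polynomial.X + Polynomial.C d) = 0)
    (ha : a ≠ 0)
    (h1 : -a ^ 6 + 8 * b * a ^ 4 - 16 * c * a ^ 3 - 16 * b ^ 2 * a ^ 2 +
      64 * b * c * a - 64 * c ^ 2 ≠ 0)
    (h2 : a ^ 6 - 8 * b * a ^ 4 + 4 * c * a ^ 3 + 20 * b ^ 2 * a ^ 2 - 24 * d * a ^ 2 -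
      8 * b * c * a - 16 * b ^ 3 - 8 * c ^ 2 + 64 * b * d ≠ 0) :
    LinearIndependent F (fun i : Fin 4 => r ^ (Fintype.card F) ^ (i : ℕ)) := by
  have : FiniteDimensional F K := Module.finite_of_finrank_pos (by omega)
  have : Finite K := Module.finite_of_finite F
  set σ := FiniteField.frobeniusAlgEquivOfAlgebraic F K
  have hmin : minpoly F r = X ^ 4 + C a * X ^ 3 + C b * X ^ 2 + C c * X + C d :=
    (minpoly.eq_of_irreducible_of_monic hirr hr (by monicity!)).symm
  have hsplit := FiniteField.map_minpoly_eq_prod_frobenius (x := r)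
    (by rw [hmin, hrank]; compute_degree!)
  rw [hmin, hrank] at hsplit
  simp only [Polynomial.map_add, Polynomial.map_mul, Polynomial.map_pow, map_X, map_C] at hsplit
  have hdet := det_of_add_ne_zero_of_quartic_eq_prod hsplit
    ((_root_.map_ne_zero (algebraMap F K)).mpr ha)
    (by simpa [map_ofNat] using (_root_.map_ne_zero (algebraMap F K)).mpr h1)
    (by simpa [map_ofNat] using (_root_.map_ne_zero (algebraMap F K)).mpr h2)
  have hσ4 : (σ ^ 4) r = r := by
    rw [← hrank, ← FiniteField.orderOf_frobeniusAlgEquivOfAlgebraic, pow_orderOf_eq_one]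
    rfl
  simpa only [σ, AlgEquiv.coe_pow, FiniteField.coe_frobeniusAlgEquivOfAlgebraic_iterate]
    using linearIndependent_pow_apply_of_det_ne_zero hσ4 hdet
end
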